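/- Let q be a prime power and n ≥ 2 an integer such that q > 2 or n ≥ 6, with q even or n odd, and let U ⊊ F_{q^n} be an F_q-linear subspace of dimension d_U = n − 1. Then ω(G_U) = q^{⌊n/2⌋} + n − 2·⌊n/2⌋ (i.e., ω(G_U) = q^{n/2} if n is even, and ω(G_U) = q^{(n−1)/2} + 1 if n is odd). -/

import Mathlib

/-!
Write `U = ker φ` for a nonzero functional `φ : F → K`; a clique of `G_U` is then a set of
pairwise orthogonal vectors for the nondegenerate symmetric form `B x y = φ (x * y)`.

In a clique, the isotropic vectors span a totally isotropic subspace `W`, which has `q ^ dim W`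
elements, while the anisotropic ones lie in `W^⊥` and are linearly independent modulo `W`, so
there are at most `n - 2 dim W` of them. When `q > 2` or `n ≥ 6`, the bound `q ^ k + n - 2k` is
largest at `k = ⌊n/2⌋`.

Conversely, let `W` be a maximal totally isotropic subspace, so that every isotropic vector of
`W^⊥` lies in `W`. If `q` is even, `x ↦ B x x` is additive and the isotropic vectors form a
hyperplane, whence `dim W^⊥ ≤ dim W + 1`. If `q` is odd, `W^⊥ / W` is anisotropic, and an
anisotropic space over `F_q` has dimension at most `2` by Chevalley–Warning; for `n` odd this
again gives `dim W^⊥ ≤ dim W + 1`. Hence `dim W = ⌊n/2⌋`, and `W`, together with one vector of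
`W^⊥ \ W` when `n` is odd, is a clique of the required size.
-/

open Module Submodule
open LinearMap (BilinForm)
open scoped Finset

/-- The Paley-like graph on a field `F` associated to a subset `S ⊆ F`:
distinct vertices `a, b ∈ F` are adjacent if and only if `a * b ∈ S`.
For an `F_q`-subspace `U`, the graph `G_U` of the paper is `paleyGraph (U : Set F)`. -/
def paleyGraph {F : Type*} [Field F] (S : Set F) : SimpleGraph F where
  Adj a b := a ≠ b ∧ a * b ∈ S
  symm := ⟨fun a b h => ⟨h.1.symm, mul_comm a b ▸ h.2⟩⟩
  loopless := ⟨fun a h => h.1 rfl⟩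

lemma pow_add_two_mul_le_pow_add {q k j : ℕ} (h : 3 ≤ q ∨ (q = 2 ∧ 3 ≤ k + j)) :
    q ^ k + 2 * j ≤ q ^ (k + j) := by
  induction j with
  | zero => simp
  | succ j ih =>
    rw [← add_assoc, pow_succ]
    by_cases hj : 3 ≤ q ∨ (q = 2 ∧ 3 ≤ k + j)
    · have hgap : 2 ≤ (q - 1) * q ^ (k + j) := by
        rcases hj with hq | ⟨rfl, hkj⟩
        · exact Nat.mul_le_mul (by omega : 2 ≤ q - 1) (Nat.one_le_pow _ _ (by omega))
        · simpa using (Nat.pow_le_pow_right two_pos hkj).trans' (by norm_num : 2 ≤ 2 ^ 3)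
      have hsplit : q ^ (k + j) * q = q ^ (k + j) + (q - 1) * q ^ (k + j) := by
        obtain ⟨r, rfl⟩ : ∃ r, q = r + 1 := ⟨q - 1, by omega⟩
        simp only [add_tsub_cancel_right]
        ring
      have := ih hj
      omega
    · obtain ⟨rfl, hkj⟩ : q = 2 ∧ k + j = 2 := by omega
      obtain ⟨rfl, rfl⟩ | ⟨rfl, rfl⟩ | ⟨rfl, rfl⟩ :
          (k = 0 ∧ j = 2) ∨ (k = 1 ∧ j = 1) ∨ (k = 2 ∧ j = 0) := by omega
      all_goals norm_num

lemma pow_add_sub_two_mul_le {q n k : ℕ} (hq : 2 ≤ q) (h : 3 ≤ q ∨ 6 ≤ n)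
    (hk : 2 * k ≤ n) :
    q ^ k + (n - 2 * k) ≤ q ^ (n / 2) + n % 2 := by
  have := pow_add_two_mul_le_pow_add (q := q) (k := k) (j := n / 2 - k) (by omega)
  rw [Nat.add_sub_cancel' (by omega)] at this
  omega

lemma SimpleGraph.cliqueNum_eq_of {α : Type*} [Finite α] {G : SimpleGraph α} {m : ℕ}
    (hle : ∀ s : Finset α, G.IsClique (s : Set α) → #s ≤ m)
    (hex : ∃ s : Finset α, G.IsClique (s : Set α) ∧ #s = m) : G.cliqueNum = m := by
  obtain ⟨s, hs⟩ := G.exists_isNClique_cliqueNum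
  obtain ⟨t, ht, rfl⟩ := hex
  exact le_antisymm (hs.card_eq ▸ hle s hs.isClique) (ht.card_le_cliqueNum)

lemma paleyGraph_isClique_iff {F : Type*} [Field F] {S s : Set F} :
    (paleyGraph S).IsClique s ↔ s.Pairwise fun a b => a * b ∈ S :=
  ⟨fun h _ ha _ hb hab => (h ha hb hab).2, fun h _ ha _ hb hab => ⟨hab, h ha hb hab⟩⟩

lemma exists_ker_eq_of_finrank_eq_add_one {K V : Type*} [Field K] [AddCommGroup V] [Module K V]
    [FiniteDimensional K V] (U : Submodule K V) (hU : finrank K V = finrank K U + 1) :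
    ∃ φ : V →ₗ[K] K, LinearMap.ker φ = U := by
  have hQ : finrank K (V ⧸ U) = finrank K K := by
    have := finrank_quotient_add_finrank U
    rw [finrank_self]
    omega
  refine ⟨(LinearEquiv.ofFinrankEq _ _ hQ).toLinearMap ∘ₗ U.mkQ, ?_⟩
  rw [LinearMap.ker_comp, LinearEquiv.ker, comap_bot, ker_mkQ]

section Bilinear

variable {K V : Type*} [Field K] [AddCommGroup V] [Module K V] {B : BilinForm K V}

lemma mem_orthogonal_span_iff {S : Set V} {x : V} :
    x ∈ B.orthogonal (span K S) ↔ ∀ y ∈ S, B y x = 0 := by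
  refine ⟨fun h y hy => h y (subset_span hy), fun h y hy => ?_⟩
  induction hy using span_induction with
  | mem y hy => exact h y hy
  | zero => simp
  | add y z _ _ hy hz => simp_all
  | smul c y _ hy => simp_all

lemma span_le_orthogonal_span {S : Set V} (hS : ∀ x ∈ S, ∀ y ∈ S, B x y = 0) :
    span K S ≤ B.orthogonal (span K S) :=
  span_le.mpr fun x hx => mem_orthogonal_span_iff.mpr fun y hy => hS y hy x hx

lemma span_inf_orthogonal_span_eq_bot {A : Finset V}
    (hA : (A : Set V).Pairwise fun a b => B a b = 0) (hAaniso : ∀ a ∈ A, B a a ≠ 0) :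
    span K (A : Set V) ⊓ B.orthogonal (span K A) = ⊥ := by
  refine eq_bot_iff.mpr fun x ⟨hxA, hxO⟩ => ?_
  obtain ⟨c, -, rfl⟩ := mem_span_finset.mp hxA
  have hc : ∀ a ∈ A, c a = 0 := fun a ha => by
    have h := mem_orthogonal_span_iff.mp hxO a ha
    rw [map_sum, Finset.sum_eq_single_of_mem a ha fun b hb hba => by
      simp [hA ha hb hba.symm]] at h
    simpa [hAaniso a ha] using h
  exact Finset.sum_eq_zero fun a ha => by simp [hc a ha]

lemma finrank_add_card_le_finrank_orthogonal [FiniteDimensional K V] (hB : B.IsRefl)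
    {W : Submodule K V} (hW : W ≤ B.orthogonal W) {A : Finset V}
    (hA : (A : Set V).Pairwise fun a b => B a b = 0) (hAaniso : ∀ a ∈ A, B a a ≠ 0)
    (hAW : ∀ a ∈ A, a ∈ B.orthogonal W) :
    finrank K W + #A ≤ finrank K (B.orthogonal W) := by
  have hli : LinearIndepOn K id (A : Set V) :=
    BilinForm.linearIndependent_of_iIsOrtho
      (fun a b hab => hA a.2 b.2 (Subtype.coe_ne_coe.mpr hab)) fun a => hAaniso a a.2
  have hWA : W ⊓ span K (A : Set V) = ⊥ := by
    refine eq_bot_iff.mpr (le_trans ?_ (span_inf_orthogonal_span_eq_bot hA hAaniso).le)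
    refine inf_comm W _ ▸ inf_le_inf_left _ fun w hw => ?_
    exact mem_orthogonal_span_iff.mpr fun a ha => hB _ _ (hAW a ha w hw)
  calc finrank K W + #A = finrank K ↥(W ⊔ span K (A : Set V)) := by
        rw [← finrank_span_finset_eq_card hli, ← finrank_sup_add_finrank_inf_eq, hWA,
          finrank_bot, add_zero]
    _ ≤ finrank K (B.orthogonal W) := finrank_mono (sup_le hW (span_le.mpr hAW))

lemma natCard_submodule_eq_pow_finrank [Fintype K] [FiniteDimensional K V] (W : Submodule K V) :
    Nat.card W = Fintype.card K ^ finrank K W := by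
  rw [natCard_eq_pow_finrank (K := K), Nat.card_eq_fintype_card]

lemma card_le_of_pairwise_orthogonal [Fintype K] [FiniteDimensional K V] (hB : B.IsRefl)
    (hnd : B.Nondegenerate) {s : Finset V} (hs : (s : Set V).Pairwise fun a b => B a b = 0) :
    ∃ k, 2 * k ≤ finrank K V ∧ #s ≤ Fintype.card K ^ k + (finrank K V - 2 * k) := by
  classical
  have : Finite V := Module.finite_of_finite K
  set S₀ := s.filter fun a => B a a = 0
  set A := s.filter fun a => ¬B a a = 0
  set W := span K (S₀ : Set V)
  have hW : W ≤ B.orthogonal W := span_le_orthogonal_span fun a ha b hb => by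
    obtain ⟨ha, haa⟩ := Finset.mem_filter.mp ha
    obtain ⟨hb, -⟩ := Finset.mem_filter.mp hb
    rcases eq_or_ne a b with rfl | hab
    exacts [haa, hs ha hb hab]
  have hAW : ∀ a ∈ A, a ∈ B.orthogonal W := fun a ha =>
    mem_orthogonal_span_iff.mpr fun b hb => by
      obtain ⟨ha, haa⟩ := Finset.mem_filter.mp ha
      obtain ⟨hb, hbb⟩ := Finset.mem_filter.mp hb
      exact hs hb ha fun hba => haa (hba ▸ hbb)
  have hA : finrank K W + #A ≤ finrank K (B.orthogonal W) :=
    finrank_add_card_le_finrank_orthogonal hB hW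
      (hs.mono (Finset.coe_subset.mpr (Finset.filter_subset _ _)))
      (fun a ha => (Finset.mem_filter.mp ha).2) hAW
  have hS₀ : #S₀ ≤ Fintype.card K ^ finrank K W :=
    calc #S₀ = (S₀ : Set V).ncard := (Set.ncard_coe_finset _).symm
      _ ≤ (W : Set V).ncard := Set.ncard_le_ncard subset_span
      _ = Fintype.card K ^ finrank K W := by
        rw [← Nat.card_coe_set_eq, SetLike.coe_sort_coe, natCard_submodule_eq_pow_finrank]
  have hsplit : #S₀ + #A = #s := Finset.card_filter_add_card_filter_not _
  have := BilinForm.finrank_orthogonal hnd W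
  have := finrank_mono hW
  exact ⟨finrank K W, by omega, by omega⟩

lemma exists_le_orthogonal_forall_isotropic_mem [FiniteDimensional K V] (hB : B.IsRefl) :
    ∃ W : Submodule K V, W ≤ B.orthogonal W ∧
      ∀ x ∈ B.orthogonal W, B x x = 0 → x ∈ W := by
  obtain ⟨W, hW, hmax⟩ := set_has_maximal_iff_noetherian.mpr inferInstance
    {W : Submodule K V | W ≤ B.orthogonal W} ⟨⊥, by simp⟩
  refine ⟨W, hW, fun x hx hxx => by_contra fun hxW => hmax (span K (insert x W)) ?_ ?_⟩
  · refine span_le_orthogonal_span ?_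
    rintro y (rfl | hy) z (rfl | hz)
    exacts [hxx, hB _ _ (hx z hz), hx y hy, hW hz y hy]
  · exact SetLike.lt_iff_le_and_exists.mpr ⟨subset_span.trans' (Set.subset_insert _ _),
      x, subset_span (Set.mem_insert _ _), hxW⟩

lemma finrank_orthogonal_add_finrank_le [FiniteDimensional K V] {W : Submodule K V}
    (hWmax : ∀ x ∈ B.orthogonal W, B x x = 0 → x ∈ W) {H : Submodule K V}
    (hH : ∀ x ∈ H, B x x = 0) :
    finrank K (B.orthogonal W) + finrank K H ≤ finrank K V + finrank K W := by
  have hle : B.orthogonal W ⊓ H ≤ W := fun x hx => hWmax x hx.1 (hH x hx.2)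
  have := finrank_sup_add_finrank_inf_eq (B.orthogonal W) H
  have := finrank_mono hle
  have := finrank_le (B.orthogonal W ⊔ H)
  omega

lemma exists_isotropic_submodule_finrank_add_one [CharP K 2] (hsq : ∀ a : K, IsSquare a)
    (hB : B.IsSymm) [FiniteDimensional K V] :
    ∃ H : Submodule K V, (∀ x ∈ H, B x x = 0) ∧ finrank K V ≤ finrank K H + 1 := by
  let H : Submodule K V :=
    { carrier := {x | B x x = 0}
      add_mem' := fun {x y} (hx : B x x = 0) (hy : B y y = 0) => by
        simp [hx, hy, hB.eq y x, CharTwo.add_self_eq_zero]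
      zero_mem' := by simp
      smul_mem' := fun c x (hx : B x x = 0) => by simp [hx] }
  refine ⟨H, fun x hx => hx, ?_⟩
  by_cases hiso : ∀ x, B x x = 0
  · have : H = ⊤ := eq_top_iff.mpr fun x _ => hiso x
    rw [this, finrank_top]
    omega
  push Not at hiso
  obtain ⟨x₀, hx₀⟩ := hiso
  have htop : H ⊔ K ∙ x₀ = ⊤ := by
    refine eq_top_iff.mpr fun y _ => ?_
    obtain ⟨c, hc⟩ := hsq (B y y / B x₀ x₀)
    have hy : y + c • x₀ ∈ H := by
      show B (y + c • x₀) (y + c • x₀) = 0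
      rw [div_eq_iff hx₀] at hc
      simp only [map_add, map_smul, LinearMap.add_apply, LinearMap.smul_apply, smul_eq_mul,
        hB.eq x₀ y]
      linear_combination (-hc) + (c * B y x₀ + B y y) * CharTwo.two_eq_zero (R := K)
    simpa using
      sub_mem (mem_sup_left hy) (mem_sup_right (smul_mem _ c (mem_span_singleton_self x₀)))
  rw [← finrank_top K V, ← htop, finrank_sup_span_singleton hx₀]

open Polynomial in
lemma finrank_le_two_of_anisotropic [Fintype K] (hK : ringChar K ≠ 2) [FiniteDimensional K V]
    (hB : B.IsSymm) (haniso : ∀ x, B x x = 0 → x = 0) : finrank K V ≤ 2 := by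
  by_contra! h3
  have : Invertible (2 : K) := invertibleOfNonzero (Ring.two_ne_zero hK)
  obtain ⟨b, hb⟩ := BilinForm.exists_orthogonal_basis (BilinForm.isSymm_iff.mp hB)
  let e : Fin 3 → V := fun i => b (Fin.castLE h3 i)
  have he : ∀ i j, i ≠ j → B (e i) (e j) = 0 := fun i j hij =>
    hb ((Fin.castLE_injective h3).ne hij)
  have hli : LinearIndependent K e := b.linearIndependent.comp _ (Fin.castLE_injective h3)
  have hdiag : ∀ i, B (e i) (e i) ≠ 0 := fun i h => b.ne_zero _ (haniso _ h)
  have hdeg : ∀ {a : K} (c : K), a ≠ 0 → (C a * X ^ 2 + C c).degree = 2 := fun c ha => by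
    compute_degree!
  obtain ⟨x, y, hxy⟩ := FiniteField.exists_root_sum_quadratic (hdeg 0 (hdiag 0))
    (hdeg (B (e 2) (e 2)) (hdiag 1)) (FiniteField.odd_card_of_char_ne_two hK)
  have hv : B (x • e 0 + y • e 1 + e 2) (x • e 0 + y • e 1 + e 2) = 0 := by
    simp only [map_add, map_smul, LinearMap.add_apply, LinearMap.smul_apply, smul_eq_mul,
      he 0 1 (by decide), he 0 2 (by decide), he 1 0 (by decide), he 1 2 (by decide),
      he 2 0 (by decide), he 2 1 (by decide)]
    simp only [eval_add, eval_mul, eval_C, eval_pow, eval_X] at hxy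
    linear_combination hxy
  have h2 := Fintype.linearIndependent_iff.mp hli ![x, y, 1]
    (by simpa [Fin.sum_univ_three] using haniso _ hv) 2
  simp at h2

lemma finrank_orthogonal_le_add_two [Fintype K] (hK : ringChar K ≠ 2) [FiniteDimensional K V]
    (hB : B.IsSymm) {W : Submodule K V} (hW : W ≤ B.orthogonal W)
    (hWmax : ∀ x ∈ B.orthogonal W, B x x = 0 → x ∈ W) :
    finrank K (B.orthogonal W) ≤ finrank K W + 2 := by
  obtain ⟨C, hC⟩ := W.exists_isCompl
  have hsplit : B.orthogonal W = W ⊔ C ⊓ B.orthogonal W := by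
    rw [← sup_inf_assoc_of_le C hW, hC.sup_eq_top, top_inf_eq]
  have hC' : finrank K ↥(C ⊓ B.orthogonal W) ≤ 2 :=
    finrank_le_two_of_anisotropic hK (hB.restrict _) fun x hx => Subtype.ext <|
      hC.disjoint.le_bot ⟨hWmax x x.2.2 hx, x.2.1⟩
  have := finrank_add_le_finrank_add_finrank W (C ⊓ B.orthogonal W)
  rw [← hsplit] at this
  omega

lemma exists_le_orthogonal_finrank_le_two_mul_add_one [Fintype K] [FiniteDimensional K V]
    (hB : B.IsSymm) (hnd : B.Nondegenerate) (hchar : ringChar K = 2 ∨ Odd (finrank K V)) :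
    ∃ W : Submodule K V, W ≤ B.orthogonal W ∧ finrank K V ≤ 2 * finrank K W + 1 := by
  obtain ⟨W, hW, hWmax⟩ := exists_le_orthogonal_forall_isotropic_mem hB.isRefl
  refine ⟨W, hW, ?_⟩
  have := BilinForm.finrank_orthogonal hnd W
  have := finrank_le W
  by_cases h2 : ringChar K = 2
  · have : CharP K 2 := ringChar.eq_iff.mp h2
    obtain ⟨H, hH, hHdim⟩ :=
      exists_isotropic_submodule_finrank_add_one (FiniteField.isSquare_of_char_two h2) hB
    have := finrank_orthogonal_add_finrank_le hWmax hH
    omega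
  · have := finrank_orthogonal_le_add_two h2 hB hW hWmax
    obtain ⟨m, hm⟩ := hchar.resolve_left h2
    omega


lemma exists_pairwise_orthogonal_card_eq [Fintype K] [FiniteDimensional K V] (hB : B.IsRefl)
    (hnd : B.Nondegenerate) {W : Submodule K V} (hW : W ≤ B.orthogonal W)
    (hdim : finrank K V ≤ 2 * finrank K W + 1) :
    ∃ s : Finset V, (s : Set V).Pairwise (fun a b => B a b = 0) ∧
      #s = Fintype.card K ^ (finrank K V / 2) + finrank K V % 2 := by
  classical
  have : Finite V := Module.finite_of_finite K
  have hWO := BilinForm.finrank_orthogonal hnd W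
  have := finrank_mono hW
  have := finrank_le W
  have hk : finrank K W = finrank K V / 2 := by omega
  set t := (W : Set V).toFinite.toFinset
  have ht : (t : Set V).Pairwise fun a b => B a b = 0 := fun a ha b hb _ => by
    simp only [t, Set.Finite.coe_toFinset, SetLike.mem_coe] at ha hb
    exact hW hb a ha
  have htcard : #t = Fintype.card K ^ (finrank K V / 2) := by
    rw [← Set.ncard_eq_toFinset_card, ← Nat.card_coe_set_eq, SetLike.coe_sort_coe,
      natCard_submodule_eq_pow_finrank, hk]
  rcases Nat.even_or_odd (finrank K V) with heven | hodd
  · exact ⟨t, ht, by rw [htcard, Nat.even_iff.mp heven, add_zero]⟩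
  · have hlt : finrank K W < finrank K (B.orthogonal W) := by
      obtain ⟨m, hm⟩ := hodd
      omega
    obtain ⟨x, hxO, hxW⟩ := SetLike.exists_of_lt (lt_of_le_of_finrank_lt_finrank hW hlt)
    have hxt : x ∉ t := by simpa [t] using hxW
    refine ⟨insert x t, ?_, ?_⟩
    · rw [Finset.coe_insert, Set.pairwise_insert]
      refine ⟨ht, fun b hb _ => ?_⟩
      have hb : b ∈ W := by simpa [t] using hb
      exact ⟨hB _ _ (hxO b hb), hxO b hb⟩
    · rw [Finset.card_insert_of_notMem hxt, htcard, Nat.odd_iff.mp hodd]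

end Bilinear

section MulForm

variable {K F : Type*} [Field K] [Field F] [Algebra K F]

def mulForm (φ : F →ₗ[K] K) : BilinForm K F := (LinearMap.mul K F).compr₂ φ

@[simp]
lemma mulForm_apply (φ : F →ₗ[K] K) (x y : F) : mulForm φ x y = φ (x * y) := rfl

lemma mulForm_isSymm (φ : F →ₗ[K] K) : (mulForm φ).IsSymm :=
  ⟨fun x y => by simp [mul_comm]⟩

lemma mulForm_nondegenerate {φ : F →ₗ[K] K} (hφ : φ ≠ 0) : (mulForm φ).Nondegenerate := by
  refine ((mulForm_isSymm φ).isRefl.nondegenerate_iff_separatingLeft).mpr fun x hx => ?_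
  by_contra hx0
  obtain ⟨z, hz⟩ := DFunLike.ne_iff.mp hφ
  exact hz (by simpa [mul_inv_cancel_left₀ hx0] using hx (x⁻¹ * z))

end MulForm

theorem omega_hyperplane_general (q n : ℕ) (h : 2 < q ∨ 6 ≤ n) (hpar : Even q ∨ Odd n)
    (K F : Type*) [Field K] [Field F] [Algebra K F] [Fintype K] [Fintype F]
    (hK : Fintype.card K = q) (hF : Fintype.card F = q ^ n)
    (U : Submodule K F) (hU : U ≠ ⊤) (hd : Module.finrank K U = n - 1) :
    (paleyGraph (U : Set F)).cliqueNum = q ^ (n / 2) + n - 2 * (n / 2) := by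
  subst hK
  have hq : 2 ≤ Fintype.card K := Fintype.one_lt_card
  obtain rfl : finrank K F = n := Nat.pow_right_injective hq (card_eq_pow_finrank.symm.trans hF)
  obtain ⟨φ, rfl⟩ := exists_ker_eq_of_finrank_eq_add_one U (by
    have : 0 < finrank K F := finrank_pos
    omega)
  have hnd : (mulForm φ).Nondegenerate := mulForm_nondegenerate fun hφ => hU (by simp [hφ])
  have hclique (s : Finset F) : (paleyGraph (LinearMap.ker φ : Set F)).IsClique (s : Set F) ↔
      (s : Set F).Pairwise fun a b => mulForm φ a b = 0 := by
    simp [paleyGraph_isClique_iff]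
  have hchar : ringChar K = 2 ∨ Odd (finrank K F) :=
    or_iff_not_imp_left.mpr fun h2 => hpar.resolve_left <| Nat.not_even_iff_odd.mpr <|
      Nat.odd_iff.mpr (FiniteField.odd_card_of_char_ne_two h2)
  obtain ⟨W, hW, hdim⟩ :=
    exists_le_orthogonal_finrank_le_two_mul_add_one (mulForm_isSymm φ) hnd hchar
  rw [show Fintype.card K ^ (finrank K F / 2) + finrank K F - 2 * (finrank K F / 2) =
    Fintype.card K ^ (finrank K F / 2) + finrank K F % 2 by omega]
  refine SimpleGraph.cliqueNum_eq_of (fun s hs => ?_) ?_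
  · obtain ⟨k, hk, hs⟩ :=
      card_le_of_pairwise_orthogonal (mulForm_isSymm φ).isRefl hnd ((hclique s).mp hs)
    exact hs.trans (pow_add_sub_two_mul_le hq h hk)
  · obtain ⟨s, hs, hcard⟩ :=
      exists_pairwise_orthogonal_card_eq (mulForm_isSymm φ).isRefl hnd hW hdim
    exact ⟨s, (hclique s).mpr hs, hcard⟩

/-- for `q > 2` or `n ≥ 6`, with `q` even or `n` odd, every `F_q`-subspace
`U ⊊ F_{q^n}` of dimension `n - 1` satisfies
`ω(G_U) = q^⌊n/2⌋ + n - 2⌊n/2⌋`. -/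
theorem omega_hyperplane (q n : ℕ) (hq : IsPrimePow q) (hn : 2 ≤ n)
    (h : 2 < q ∨ 6 ≤ n) (hpar : Even q ∨ Odd n)
    (K F : Type*) [Field K] [Field F] [Algebra K F] [Fintype K] [Fintype F]
    (hK : Fintype.card K = q) (hF : Fintype.card F = q ^ n)
    (U : Submodule K F) (hU : U ≠ ⊤) (hd : Module.finrank K U = n - 1) :
    (paleyGraph (U : Set F)).cliqueNum = q ^ (n / 2) + n - 2 * (n / 2) :=
  omega_hyperplane_general q n h hpar K F hK hF U hU hd
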